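/- Suppose A_1,…,A_n satisfy (2,δ)-RIP with δ < 1, b_i = ⟨A_i,M*⟩, and M ∈ ℝ^{d_L×d_0} satisfies ⟨A_i,M⟩ = b_i for all i and ‖M‖_* ≤ ((1+δ)/(1−δ))‖M*‖_*. Then ‖M − M*‖_F² ≤ 8δ/(1−δ)² · ‖M*‖_*². -/

import Mathlib

/-!
Put `N = M - M*`. The eigendecomposition of `NᵀN` writes `N = ∑ⱼ σⱼ uⱼ vⱼᵀ` with `σⱼ ≥ 0`,
`∑ⱼ σⱼ = ‖N‖_*`, orthonormal `vⱼ` and orthogonal `uⱼ` of length at most one. Polarizing the RIP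
inequality on the rank-2 matrices `P ± Q` bounds the isometry defect
`⟨P, Q⟩ - (1/n) ∑ᵢ ⟨Aᵢ, P⟩⟨Aᵢ, Q⟩` of two such dyads by `δ`. The defect is bilinear, and on `N`,
which the measurements do not see, it equals `‖N‖_F²`; hence `‖N‖_F² ≤ δ ‖N‖_*²`. Duality against
the polar factor `∑ⱼ uⱼ vⱼᵀ` gives the triangle inequality for `‖·‖_*`, so
`‖N‖_* ≤ 2 ‖M*‖_* / (1 - δ)`, and the bound follows with `4δ` in place of `8δ`.
A negative `δ` is only possible when there are no nonzero matrices at all.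
-/

open Matrix Finset

noncomputable def frobNorm {m n : Type*} [Fintype m] [Fintype n] (M : Matrix m n ℝ) : ℝ :=
  Real.sqrt (∑ i, ∑ j, (M i j) ^ 2)

noncomputable def nuclearNorm {m n : Type*} [Fintype m] [Fintype n] [DecidableEq n]
    (M : Matrix m n ℝ) : ℝ :=
  ∑ i, Real.sqrt ((Matrix.isHermitian_conjTranspose_mul_self M).eigenvalues i)

/-- trace inner product ⟨A, B⟩ = tr(Aᵀ B). -/
noncomputable def minner {m n : Type*} [Fintype m] [Fintype n] (A B : Matrix m n ℝ) : ℝ :=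
  Matrix.trace (Aᵀ * B)

/-- (r, δ)-RIP for the family of measurement matrices A. -/
noncomputable def RIP {dL d0 n : ℕ} (r : ℕ) (δ : ℝ)
    (A : Fin n → Matrix (Fin dL) (Fin d0) ℝ) : Prop :=
  ∀ X : Matrix (Fin dL) (Fin d0) ℝ, X.rank ≤ r →
    (1 - δ) * frobNorm X ^ 2 ≤ (1 / (n : ℝ)) * ∑ i, minner (A i) X ^ 2 ∧
    (1 / (n : ℝ)) * ∑ i, minner (A i) X ^ 2 ≤ (1 + δ) * frobNorm X ^ 2

section Minner

variable {m n : Type*} [Fintype m] [Fintype n]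

lemma minner_comm (A B : Matrix m n ℝ) : minner A B = minner B A := by
  rw [minner, minner, ← trace_transpose, transpose_mul, transpose_transpose]

lemma minner_zero_right (A : Matrix m n ℝ) : minner A 0 = 0 := by
  simp [minner]

lemma minner_add_right (A B C : Matrix m n ℝ) :
    minner A (B + C) = minner A B + minner A C := by
  simp [minner, Matrix.mul_add, trace_add]

lemma minner_add_left (A B C : Matrix m n ℝ) :
    minner (A + B) C = minner A C + minner B C := by
  simp only [minner_comm _ C, minner_add_right]

lemma minner_sub_right (A B C : Matrix m n ℝ) :
    minner A (B - C) = minner A B - minner A C := by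
  simp [minner, Matrix.mul_sub, trace_sub]

lemma minner_sub_left (A B C : Matrix m n ℝ) :
    minner (A - B) C = minner A C - minner B C := by
  simp only [minner_comm _ C, minner_sub_right]

lemma minner_smul_right (c : ℝ) (A B : Matrix m n ℝ) :
    minner A (c • B) = c * minner A B := by
  simp [minner]

lemma minner_smul_left (c : ℝ) (A B : Matrix m n ℝ) :
    minner (c • A) B = c * minner A B := by
  simp [minner]

lemma minner_neg_left (A B : Matrix m n ℝ) : minner (-A) B = -minner A B := by
  simp [minner]

lemma minner_sum_right {ι : Type*} (s : Finset ι) (A : Matrix m n ℝ) (B : ι → Matrix m n ℝ) :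
    minner A (∑ j ∈ s, B j) = ∑ j ∈ s, minner A (B j) := by
  simp [minner, Matrix.mul_sum, trace_sum]

lemma minner_sum_left {ι : Type*} (s : Finset ι) (A : ι → Matrix m n ℝ) (B : Matrix m n ℝ) :
    minner (∑ j ∈ s, A j) B = ∑ j ∈ s, minner (A j) B := by
  simp only [minner_comm _ B, minner_sum_right]

lemma minner_vecMulVec_right (C : Matrix m n ℝ) (u : m → ℝ) (v : n → ℝ) :
    minner C (vecMulVec u v) = u ⬝ᵥ (C *ᵥ v) := by
  simp only [minner, trace, Matrix.diag, mul_apply, transpose_apply, vecMulVec_apply, dotProduct,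
    mulVec, Finset.mul_sum]
  rw [Finset.sum_comm]
  exact Finset.sum_congr rfl fun i _ => Finset.sum_congr rfl fun j _ => by ring

lemma minner_vecMulVec_vecMulVec (a c : m → ℝ) (b d : n → ℝ) :
    minner (vecMulVec a b) (vecMulVec c d) = (a ⬝ᵥ c) * (b ⬝ᵥ d) := by
  rw [minner_vecMulVec_right, vecMulVec_mulVec]
  simp [dotProduct_comm c a, dotProduct_comm b d, mul_comm]

lemma frobNorm_sq (X : Matrix m n ℝ) : frobNorm X ^ 2 = minner X X := by
  rw [frobNorm, Real.sq_sqrt (by positivity), minner, trace, Finset.sum_comm]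
  simp [mul_apply, sq]

end Minner

lemma two_mul_dotProduct_le {ι : Type*} [Fintype ι] (u w : ι → ℝ) :
    2 * (u ⬝ᵥ w) ≤ u ⬝ᵥ u + w ⬝ᵥ w := by
  simp only [dotProduct, Finset.mul_sum, ← Finset.sum_add_distrib]
  exact Finset.sum_le_sum fun i _ => by nlinarith [two_mul_le_add_sq (u i) (w i)]

namespace Matrix

section Rank

variable {K m n : Type*} [Field K] [Fintype n]

lemma rank_add_le (P Q : Matrix m n K) : (P + Q).rank ≤ P.rank + Q.rank := by
  rw [rank, rank, rank, mulVecLin_add]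
  exact (Submodule.finrank_mono (LinearMap.range_add_le _ _)).trans
    (Submodule.finrank_add_le_finrank_add_finrank _ _)

lemma rank_neg (Q : Matrix m n K) : (-Q).rank = Q.rank := by
  rw [← neg_one_smul K Q, rank_smul_of_mem_nonZeroDivisors]
  exact isUnit_one.neg.mem_nonZeroDivisors

lemma rank_sub_le (P Q : Matrix m n K) : (P - Q).rank ≤ P.rank + Q.rank := by
  simpa [sub_eq_add_neg, rank_neg] using rank_add_le P (-Q)

end Rank

variable {m n : Type*} [Fintype m] [Fintype n]

def IsContraction (C : Matrix m n ℝ) : Prop :=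
  ∀ x, (C *ᵥ x) ⬝ᵥ (C *ᵥ x) ≤ x ⬝ᵥ x

lemma IsContraction.neg {C : Matrix m n ℝ} (hC : C.IsContraction) : (-C).IsContraction := by
  intro x
  simpa [neg_mulVec] using hC x

variable [DecidableEq n] (X : Matrix m n ℝ)

noncomputable def rightSingularVector (j : n) : n → ℝ :=
  ⇑((isHermitian_conjTranspose_mul_self X).eigenvectorBasis j)

noncomputable def singularValue (j : n) : ℝ :=
  √((isHermitian_conjTranspose_mul_self X).eigenvalues j)

/-- Since `0⁻¹ = 0`, this is the zero vector when `X.singularValue j = 0`. -/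
noncomputable def leftSingularVector (j : n) : m → ℝ :=
  (X.singularValue j)⁻¹ • (X *ᵥ X.rightSingularVector j)

lemma _root_.nuclearNorm_eq_sum_singularValue : nuclearNorm X = ∑ j, X.singularValue j := rfl

lemma singularValue_nonneg (j : n) : 0 ≤ X.singularValue j := Real.sqrt_nonneg _

lemma rightSingularVector_dotProduct (j k : n) :
    X.rightSingularVector j ⬝ᵥ X.rightSingularVector k = if j = k then 1 else 0 := by
  have := orthonormal_iff_ite.mp
    (isHermitian_conjTranspose_mul_self X).eigenvectorBasis.orthonormal k j
  simpa [EuclideanSpace.inner_eq_star_dotProduct, rightSingularVector, eq_comm] using this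

lemma sum_vecMulVec_rightSingularVector :
    ∑ j, vecMulVec (X.rightSingularVector j) (X.rightSingularVector j) = 1 := by
  rw [← mem_unitaryGroup_iff.mp (isHermitian_conjTranspose_mul_self X).eigenvectorUnitary.2]
  ext a c
  simp [mul_apply, vecMulVec_apply, rightSingularVector, Matrix.sum_apply]

lemma sum_sq_rightSingularVector_dotProduct (x : n → ℝ) :
    ∑ j, (X.rightSingularVector j ⬝ᵥ x) ^ 2 = x ⬝ᵥ x :=
  calc ∑ j, (X.rightSingularVector j ⬝ᵥ x) ^ 2
      = x ⬝ᵥ ((∑ j, vecMulVec (X.rightSingularVector j) (X.rightSingularVector j)) *ᵥ x) := by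
        simp [sum_mulVec, vecMulVec_mulVec, sum_dotProduct, sq, dotProduct_comm x]
    _ = x ⬝ᵥ x := by rw [sum_vecMulVec_rightSingularVector, one_mulVec]

lemma mulVec_rightSingularVector_dotProduct (j k : n) :
    (X *ᵥ X.rightSingularVector j) ⬝ᵥ (X *ᵥ X.rightSingularVector k) =
      if j = k then X.singularValue j ^ 2 else 0 := by
  have hX := isHermitian_conjTranspose_mul_self X
  rw [dotProduct_mulVec, ← mulVec_transpose, mulVec_mulVec,
    ← conjTranspose_eq_transpose_of_trivial, rightSingularVector, hX.mulVec_eigenvectorBasis,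
    smul_dotProduct, ← rightSingularVector, rightSingularVector_dotProduct, singularValue,
    Real.sq_sqrt (eigenvalues_conjTranspose_mul_self_nonneg X j)]
  split_ifs <;> simp

lemma mulVec_rightSingularVector_eq_zero {j : n} (hj : X.singularValue j = 0) :
    X *ᵥ X.rightSingularVector j = 0 :=
  dotProduct_self_eq_zero.mp (by rw [mulVec_rightSingularVector_dotProduct, if_pos rfl, hj]; ring)

lemma singularValue_smul_leftSingularVector (j : n) :
    X.singularValue j • X.leftSingularVector j = X *ᵥ X.rightSingularVector j := by
  rcases eq_or_ne (X.singularValue j) 0 with h | h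
  · simp [leftSingularVector, h, mulVec_rightSingularVector_eq_zero]
  · rw [leftSingularVector, smul_smul, mul_inv_cancel₀ h, one_smul]

lemma leftSingularVector_dotProduct (j k : n) :
    X.leftSingularVector j ⬝ᵥ X.leftSingularVector k =
      if j = k ∧ X.singularValue j ≠ 0 then 1 else 0 := by
  simp only [leftSingularVector, smul_dotProduct, dotProduct_smul,
    mulVec_rightSingularVector_dotProduct, smul_eq_mul]
  by_cases hjk : j = k
  · subst hjk
    by_cases h : X.singularValue j = 0
    · simp [h]
    · rw [if_pos rfl, if_pos ⟨rfl, h⟩]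
      field_simp
  · simp [hjk]

lemma dotProduct_leftSingularVector_self_le_one (j : n) :
    X.leftSingularVector j ⬝ᵥ X.leftSingularVector j ≤ 1 := by
  rw [leftSingularVector_dotProduct]; split_ifs <;> norm_num

lemma sum_singularValue_smul_vecMulVec :
    ∑ j, X.singularValue j • vecMulVec (X.leftSingularVector j) (X.rightSingularVector j) = X := by
  simp_rw [← smul_vecMulVec, singularValue_smul_leftSingularVector, ← mul_vecMulVec,
    ← Matrix.mul_sum, sum_vecMulVec_rightSingularVector, Matrix.mul_one]

lemma minner_eq_sum_singularValue_mul (C : Matrix m n ℝ) :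
    minner C X =
      ∑ j, X.singularValue j * (X.leftSingularVector j ⬝ᵥ (C *ᵥ X.rightSingularVector j)) := by
  conv_lhs => rw [← X.sum_singularValue_smul_vecMulVec]
  simp only [minner_sum_right, minner_smul_right, minner_vecMulVec_right]

lemma IsContraction.minner_le_nuclearNorm {C : Matrix m n ℝ} (hC : C.IsContraction) :
    minner C X ≤ nuclearNorm X := by
  rw [minner_eq_sum_singularValue_mul, nuclearNorm_eq_sum_singularValue]
  refine Finset.sum_le_sum fun j _ => mul_le_of_le_one_right (X.singularValue_nonneg j) ?_
  have hu := X.dotProduct_leftSingularVector_self_le_one j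
  have hv := X.rightSingularVector_dotProduct j j
  have hCv := hC (X.rightSingularVector j)
  have := two_mul_dotProduct_le (X.leftSingularVector j) (C *ᵥ X.rightSingularVector j)
  rw [if_pos rfl] at hv
  linarith

noncomputable def polarFactor : Matrix m n ℝ :=
  ∑ j, vecMulVec (X.leftSingularVector j) (X.rightSingularVector j)

lemma polarFactor_mulVec_rightSingularVector (j : n) :
    X.polarFactor *ᵥ X.rightSingularVector j = X.leftSingularVector j := by
  simp [polarFactor, sum_mulVec, vecMulVec_mulVec, rightSingularVector_dotProduct]

lemma isContraction_polarFactor : X.polarFactor.IsContraction := by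
  intro x
  have hCx : X.polarFactor *ᵥ x =
      ∑ j, (X.rightSingularVector j ⬝ᵥ x) • X.leftSingularVector j := by
    simp [polarFactor, sum_mulVec, vecMulVec_mulVec]
  rw [hCx, ← X.sum_sq_rightSingularVector_dotProduct x]
  simp only [sum_dotProduct, dotProduct_sum, smul_dotProduct, dotProduct_smul,
    leftSingularVector_dotProduct, smul_eq_mul]
  refine Finset.sum_le_sum fun j _ => ?_
  simp only [mul_ite, mul_one, mul_zero, ite_and, Finset.sum_ite_eq', Finset.mem_univ, if_true]
  split_ifs <;> nlinarith [sq_nonneg (X.rightSingularVector j ⬝ᵥ x)]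

lemma minner_polarFactor_self : minner X.polarFactor X = nuclearNorm X := by
  rw [minner_eq_sum_singularValue_mul, nuclearNorm_eq_sum_singularValue]
  refine Finset.sum_congr rfl fun j _ => ?_
  rw [polarFactor_mulVec_rightSingularVector, leftSingularVector_dotProduct]
  split_ifs with h <;> simp_all

end Matrix

section NuclearNorm

variable {m n : Type*} [Fintype m] [Fintype n] [DecidableEq n]

lemma nuclearNorm_nonneg (X : Matrix m n ℝ) : 0 ≤ nuclearNorm X :=
  Finset.sum_nonneg fun j _ => X.singularValue_nonneg j

lemma nuclearNorm_zero : nuclearNorm (0 : Matrix m n ℝ) = 0 := by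
  rw [← minner_polarFactor_self, minner_zero_right]

lemma nuclearNorm_sub_le (P Q : Matrix m n ℝ) :
    nuclearNorm (P - Q) ≤ nuclearNorm P + nuclearNorm Q := by
  have hC := (P - Q).isContraction_polarFactor
  rw [← minner_polarFactor_self, minner_sub_right, sub_eq_add_neg, ← minner_neg_left]
  exact add_le_add (hC.minner_le_nuclearNorm P) (hC.neg.minner_le_nuclearNorm Q)

end NuclearNorm

section IsometryDefect

variable {m k : Type*} [Fintype m] [Fintype k] {n : ℕ}

noncomputable def isometryDefect (A : Fin n → Matrix m k ℝ) (X Y : Matrix m k ℝ) : ℝ :=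
  minner X Y - (1 / (n : ℝ)) * ∑ i, minner (A i) X * minner (A i) Y

lemma isometryDefect_sum_smul_sum_smul (A : Fin n → Matrix m k ℝ) {ι : Type*} (s : Finset ι)
    (c : ι → ℝ) (E : ι → Matrix m k ℝ) :
    isometryDefect A (∑ j ∈ s, c j • E j) (∑ j ∈ s, c j • E j) =
      ∑ j ∈ s, ∑ l ∈ s, c j * c l * isometryDefect A (E j) (E l) := by
  have hexact : minner (∑ j ∈ s, c j • E j) (∑ j ∈ s, c j • E j) =
      ∑ j ∈ s, ∑ l ∈ s, c j * c l * minner (E j) (E l) := by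
    simp only [minner_sum_left, minner_sum_right, minner_smul_left, minner_smul_right,
      Finset.mul_sum]
    exact Finset.sum_congr rfl fun j _ => Finset.sum_congr rfl fun l _ => by
      rw [minner_comm]; ring
  have hsample : (1 / (n : ℝ)) * ∑ i, minner (A i) (∑ j ∈ s, c j • E j) *
        minner (A i) (∑ j ∈ s, c j • E j) =
      ∑ j ∈ s, ∑ l ∈ s,
        c j * c l * ((1 / (n : ℝ)) * ∑ i, minner (A i) (E j) * minner (A i) (E l)) := by
    simp only [minner_sum_right, minner_smul_right]
    simp_rw [Finset.sum_mul_sum, Finset.mul_sum]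
    rw [Finset.sum_comm]
    refine Finset.sum_congr rfl fun j _ => ?_
    rw [Finset.sum_comm]
    exact Finset.sum_congr rfl fun l _ => Finset.sum_congr rfl fun i _ => by ring
  simp only [isometryDefect, hexact, hsample, ← Finset.sum_sub_distrib, mul_sub]

lemma isometryDefect_self_of_forall_minner_eq_zero {A : Fin n → Matrix m k ℝ} {N : Matrix m k ℝ}
    (hN : ∀ i, minner (A i) N = 0) : isometryDefect A N N = frobNorm N ^ 2 := by
  simp [isometryDefect, hN, frobNorm_sq]

end IsometryDefect

namespace RIP

variable {dL d0 n r : ℕ} {δ : ℝ} {A : Fin n → Matrix (Fin dL) (Fin d0) ℝ}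

lemma isometryDefect_le (hA : RIP r δ A) {P Q : Matrix (Fin dL) (Fin d0) ℝ}
    (hPQ : P.rank + Q.rank ≤ r) :
    isometryDefect A P Q ≤ δ / 2 * (frobNorm P ^ 2 + frobNorm Q ^ 2) := by
  have hplus := (hA (P + Q) ((rank_add_le P Q).trans hPQ)).1
  have hminus := (hA (P - Q) ((rank_sub_le P Q).trans hPQ)).2
  have hpolar : (1 / (n : ℝ)) * ∑ i, minner (A i) (P + Q) ^ 2 -
      (1 / (n : ℝ)) * ∑ i, minner (A i) (P - Q) ^ 2 =
      4 * ((1 / (n : ℝ)) * ∑ i, minner (A i) P * minner (A i) Q) := by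
    rw [← mul_sub, ← Finset.sum_sub_distrib, Finset.mul_sum, Finset.mul_sum, Finset.mul_sum]
    exact Finset.sum_congr rfl fun i _ => by rw [minner_add_right, minner_sub_right]; ring
  have hplus_sq : frobNorm (P + Q) ^ 2 = frobNorm P ^ 2 + 2 * minner P Q + frobNorm Q ^ 2 := by
    simp only [frobNorm_sq, minner_add_left, minner_add_right, minner_comm Q P]; ring
  have hminus_sq : frobNorm (P - Q) ^ 2 = frobNorm P ^ 2 - 2 * minner P Q + frobNorm Q ^ 2 := by
    simp only [frobNorm_sq, minner_sub_left, minner_sub_right, minner_comm Q P]; ring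
  rw [hplus_sq] at hplus
  rw [hminus_sq] at hminus
  rw [isometryDefect]
  linarith

lemma eq_zero_of_neg (hA : RIP r δ A) (hr : 1 ≤ r) (hδ : δ < 0)
    (X : Matrix (Fin dL) (Fin d0) ℝ) : X = 0 := by
  ext a b
  exfalso
  have hX := hA (vecMulVec (Pi.single a 1) (Pi.single b 1)) ((rank_vecMulVec_le _ _).trans hr)
  rw [frobNorm_sq, minner_vecMulVec_vecMulVec] at hX
  simp only [dotProduct_single, Pi.single_eq_same, mul_one] at hX
  linarith [hX.1, hX.2]

lemma frobNorm_sq_le_of_forall_minner_eq_zero (hA : RIP 2 δ A) (hδ : 0 ≤ δ)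
    {N : Matrix (Fin dL) (Fin d0) ℝ} (hN : ∀ i, minner (A i) N = 0) :
    frobNorm N ^ 2 ≤ δ * nuclearNorm N ^ 2 := by
  set E := fun j => vecMulVec (N.leftSingularVector j) (N.rightSingularVector j)
  have hE_frobNorm : ∀ j, frobNorm (E j) ^ 2 ≤ 1 := fun j => by
    rw [frobNorm_sq, minner_vecMulVec_vecMulVec, rightSingularVector_dotProduct, if_pos rfl,
      mul_one]
    exact N.dotProduct_leftSingularVector_self_le_one j
  have hE_rank : ∀ j, (E j).rank ≤ 1 := fun j => rank_vecMulVec_le _ _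
  have hE_defect : ∀ j l, isometryDefect A (E j) (E l) ≤ δ := fun j l =>
    calc isometryDefect A (E j) (E l) ≤ δ / 2 * (frobNorm (E j) ^ 2 + frobNorm (E l) ^ 2) :=
          hA.isometryDefect_le (add_le_add (hE_rank j) (hE_rank l))
      _ ≤ δ / 2 * (1 + 1) := by gcongr <;> exact hE_frobNorm _
      _ = δ := by ring
  calc frobNorm N ^ 2 = isometryDefect A N N :=
        (isometryDefect_self_of_forall_minner_eq_zero hN).symm
    _ = ∑ j, ∑ l, N.singularValue j * N.singularValue l * isometryDefect A (E j) (E l) := by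
        rw [← isometryDefect_sum_smul_sum_smul, N.sum_singularValue_smul_vecMulVec]
    _ ≤ ∑ j, ∑ l, N.singularValue j * N.singularValue l * δ := by
        gcongr with j _ l _
        · exact mul_nonneg (N.singularValue_nonneg j) (N.singularValue_nonneg l)
        · exact hE_defect j l
    _ = δ * nuclearNorm N ^ 2 := by
        rw [nuclearNorm_eq_sum_singularValue, sq, Finset.sum_mul_sum, Finset.mul_sum]
        simp only [Finset.mul_sum]
        exact Finset.sum_congr rfl fun j _ => Finset.sum_congr rfl fun l _ => by ring

end RIP

/-- Under (2,δ)-RIP, any interpolating M with nuclear norm at most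
    ((1+δ)/(1-δ))‖M*‖_* recovers the ground truth up to 8δ/(1-δ)² ‖M*‖_*². -/
theorem rip_recovery {n d0 dL : ℕ} (δ : ℝ) (hδ : δ < 1)
    (A : Fin n → Matrix (Fin dL) (Fin d0) ℝ) (hA : RIP 2 δ A)
    (Mstar M : Matrix (Fin dL) (Fin d0) ℝ) (b : Fin n → ℝ)
    (hb : ∀ i, b i = minner (A i) Mstar)
    (hfit : ∀ i, minner (A i) M = b i)
    (hnuc : nuclearNorm M ≤ ((1 + δ) / (1 - δ)) * nuclearNorm Mstar) :
    frobNorm (M - Mstar) ^ 2 ≤ 8 * δ / (1 - δ) ^ 2 * nuclearNorm Mstar ^ 2 := by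
  rcases lt_or_ge δ 0 with hneg | hδ0
  · rw [hA.eq_zero_of_neg one_le_two hneg Mstar, hA.eq_zero_of_neg one_le_two hneg M]
    simp [frobNorm, nuclearNorm_zero]
  have hpos : 0 < 1 - δ := sub_pos.mpr hδ
  have hnull : ∀ i, minner (A i) (M - Mstar) = 0 := fun i => by
    rw [minner_sub_right, hfit, hb, sub_self]
  have hsub : nuclearNorm (M - Mstar) ≤ 2 / (1 - δ) * nuclearNorm Mstar :=
    calc nuclearNorm (M - Mstar) ≤ nuclearNorm M + nuclearNorm Mstar := nuclearNorm_sub_le M Mstar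
      _ ≤ (1 + δ) / (1 - δ) * nuclearNorm Mstar + nuclearNorm Mstar := by gcongr
      _ = 2 / (1 - δ) * nuclearNorm Mstar := by field_simp; ring
  calc frobNorm (M - Mstar) ^ 2 ≤ δ * nuclearNorm (M - Mstar) ^ 2 :=
        hA.frobNorm_sq_le_of_forall_minner_eq_zero hδ0 hnull
    _ ≤ δ * (2 / (1 - δ) * nuclearNorm Mstar) ^ 2 := by
        gcongr
        exact nuclearNorm_nonneg _
    _ = 4 * δ / (1 - δ) ^ 2 * nuclearNorm Mstar ^ 2 := by rw [mul_pow, div_pow]; ring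
    _ ≤ 8 * δ / (1 - δ) ^ 2 * nuclearNorm Mstar ^ 2 := by gcongr; norm_num
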